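/- Let G be a group, H ≤ G a subgroup, F ⊆ H a finite subset, A a finite alphabet and L ⊆ A^F, and suppose the SFT Y ⊆ A^H defined by (F, L) on H is nonempty and satisfies: for every g ∈ G with g ≠ 1 there exist t ∈ G and an integer n > 0 with (t g t⁻¹)^n ∈ Free(Y). Then the SFT X ⊆ A^G defined by (F, L) on G is nonempty and strongly aperiodic. -/

import Mathlib

/-!
A configuration `y` of `Y` on `H` extends to a configuration of `X` on `G` by copying it onto
every left coset of `H`, so `X` is nonempty. Conversely, if `g ≠ 1` fixed some `x ∈ X`, then the
conjugate `t g t⁻¹` and all its powers fix `t • x ∈ X`; restricting `t • x` to `H` gives a point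
of `Y` fixed by the power `(t g t⁻¹)ⁿ ∈ Free(Y)`, which is impossible.
-/

variable {G A : Type*}

/-- The left shift action of a group on configurations: `(shift g x) h = x (g⁻¹ * h)`. -/
def shift [Group G] (g : G) (x : G → A) : G → A := fun h => x (g⁻¹ * h)

/-- The subshift of finite type on `G` defined by the shape `F` and the pattern set `L`:
all configurations `x` such that for every `g`, the restriction of `g • x` to `F` lies in `L`. -/
def SFT [Group G] (F : Set G) (L : Set (F → A)) : Set (G → A) :=
  {x | ∀ g : G, (fun f : F => shift g x f) ∈ L}

/-- The subshift of finite type on the subgroup `H` defined by the shape `F ⊆ H`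
and the pattern set `L`. -/
def SFTon [Group G] (H : Subgroup G) (F : Set G) (hF : F ⊆ (H : Set G)) (L : Set (F → A)) :
    Set (↥H → A) :=
  {y | ∀ h : ↥H, (fun f : F => y (h⁻¹ * ⟨(f : G), hF f.2⟩)) ∈ L}

/-- The free part of a subshift: elements acting freely on every configuration. -/
def freePart [Group G] (X : Set (G → A)) : Set G := {g | ∀ x ∈ X, shift g x ≠ x}

section Shift

variable [Group G]

lemma shift_mul (a b : G) (x : G → A) : shift (a * b) x = shift a (shift b x) := by
  funext h
  simp [shift, mul_assoc]

lemma shift_pow_eq_self {c : G} {x : G → A} (hc : shift c x = x) (n : ℕ) :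
    shift (c ^ n) x = x := by
  induction n with
  | zero => funext h; simp [shift]
  | succ n ih => rw [pow_succ, shift_mul, hc, ih]

lemma shift_conj_eq_self {g : G} {x : G → A} (hg : shift g x = x) (t : G) :
    shift (t * g * t⁻¹) (shift t x) = shift t x := by
  rw [← shift_mul, inv_mul_cancel_right, shift_mul, hg]

lemma shift_mem_SFT {F : Set G} {L : Set (F → A)} {x : G → A} (hx : x ∈ SFT F L) (t : G) :
    shift t x ∈ SFT F L := by
  intro g
  simpa only [← shift_mul] using hx (g * t)

end Shift

section Subgroup

variable [Group G] (H : Subgroup G)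

lemma restrict_mem_SFTon {F : Set G} (hF : F ⊆ (H : Set G)) {L : Set (F → A)}
    {x : G → A} (hx : x ∈ SFT F L) : (fun h : H => x h) ∈ SFTon H F hF L := by
  intro h
  simpa [shift] using hx h

lemma shift_restrict_eq_self {x : G → A} {k : H} (hk : shift (k : G) x = x) :
    shift k (fun h : H => x h) = fun h : H => x h := by
  funext h
  simpa [shift] using congrFun hk h

lemma out_inv_mul_mem (g : G) : (Quotient.out (g : G ⧸ H))⁻¹ * g ∈ H := by
  obtain ⟨h, hh⟩ := QuotientGroup.mk_out_eq_mul H g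
  simp [hh, mul_assoc]

noncomputable def cosetExtend (y : H → A) : G → A :=
  fun g => y ⟨(Quotient.out (g : G ⧸ H))⁻¹ * g, out_inv_mul_mem H g⟩

lemma cosetExtend_mul_of_mem (y : H → A) (g : G) {a : G} (ha : a ∈ H) :
    cosetExtend H y (g * a) = y (⟨_, out_inv_mul_mem H g⟩ * ⟨a, ha⟩) := by
  have hcoset : ((g * a : G) : G ⧸ H) = g := QuotientGroup.mk_mul_of_mem g ha
  simp only [cosetExtend, hcoset]
  congr 1
  ext
  simp [mul_assoc]

lemma cosetExtend_mem_SFT {F : Set G} (hF : F ⊆ (H : Set G)) {L : Set (F → A)}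
    {y : H → A} (hy : y ∈ SFTon H F hF L) : cosetExtend H y ∈ SFT F L := by
  intro g
  convert hy (⟨_, out_inv_mul_mem H g⁻¹⟩)⁻¹ using 2 with f
  rw [inv_inv]
  exact cosetExtend_mul_of_mem H y g⁻¹ (hF f.2)

end Subgroup

theorem SA_of_cond_general
    {G A : Type*} [Group G] (H : Subgroup G) (F : Set G)
    (hF : F ⊆ (H : Set G)) (L : Set (F → A))
    (hYne : (SFTon H F hF L).Nonempty)
    (hcond : ∀ g : G, g ≠ 1 → ∃ t : G, ∃ n : ℕ, 0 < n ∧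
      ∃ k : ↥H, (k : G) = (t * g * t⁻¹) ^ n ∧ k ∈ freePart (SFTon H F hF L)) :
    (SFT F L).Nonempty ∧ ∀ x ∈ SFT F L, ∀ g : G, shift g x = x → g = 1 := by
  obtain ⟨y, hy⟩ := hYne
  refine ⟨⟨cosetExtend H y, cosetExtend_mem_SFT H hF hy⟩, fun x hx g hfix => ?_⟩
  by_contra hg
  obtain ⟨t, n, -, k, hk, hkfree⟩ := hcond g hg
  have hkfix : shift (k : G) (shift t x) = shift t x := by
    rw [hk]
    exact shift_pow_eq_self (shift_conj_eq_self hfix t) n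
  exact hkfree _ (restrict_mem_SFTon H hF (shift_mem_SFT hx t))
    (shift_restrict_eq_self H hkfix)

/-- If the SFT `Y` defined by `(F, L)` on `H ≤ G` is nonempty and every
nontrivial `g ∈ G` has a conjugate with a positive power in `Free(Y)`, then the SFT `X`
defined by `(F, L)` on `G` is nonempty and strongly aperiodic. -/
theorem SA_of_cond
    {G A : Type*} [Group G] [Finite A] (H : Subgroup G) (F : Set G) (hFfin : F.Finite)
    (hF : F ⊆ (H : Set G)) (L : Set (F → A))
    (hYne : (SFTon H F hF L).Nonempty)
    (hcond : ∀ g : G, g ≠ 1 → ∃ t : G, ∃ n : ℕ, 0 < n ∧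
      ∃ k : ↥H, (k : G) = (t * g * t⁻¹) ^ n ∧ k ∈ freePart (SFTon H F hF L)) :
    (SFT F L).Nonempty ∧ ∀ x ∈ SFT F L, ∀ g : G, shift g x = x → g = 1 :=
  SA_of_cond_general H F hF L hYne hcond
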